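/- Let (V,w) be a weighted graph, let k < h ≤ |V| be integers, and let H ⊆ V be a set of h vertices such that every vertex of H has weighted degree at least the weighted degree of every vertex of V∖H. Then for every S ⊆ V with |S| = k there exists S' ⊆ H with |S'| = k such that δ_w(S') ≥ (1 − 2k/(h−k))·δ_w(S). (Iterated exchange step in the proof of Theorem 2.1.) -/

import Mathlib

open Finset

/-- The cut value of a set `S`: total weight of pairs with exactly one endpoint in `S`. -/
noncomputable def cutVal {V : Type*} [Fintype V] [DecidableEq V]
    (w : V → V → ℝ) (S : Finset V) : ℝ :=
  ∑ u ∈ S, ∑ v ∈ Sᶜ, w u v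

/-- The weighted degree of a vertex `v`. -/
noncomputable def wdeg {V : Type*} [Fintype V] [DecidableEq V]
    (w : V → V → ℝ) (v : V) : ℝ :=
  ∑ u ∈ Finset.univ.erase v, w u v

/-!
Exchange vertices of `S ∖ H` one at a time. Removing `u ∈ S ∖ H` from `S` and adding `v ∈ H ∖ S`
changes the cut by `δ(v) - δ(u) - 2 w(T, v) + 2 w(T, u)` with `T = S - u`; the degree condition
makes `δ(v) - δ(u) ≥ 0`, and since the `≥ h - k` candidates `v` have disjoint edge sets
`w(S, v)` inside the cut of `S`, one of them has `w(T, v) ≤ δ(S)/(h - k)`. Each exchange thus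
loses at most a `2/(h - k)` fraction of the current cut, and at most `k` exchanges are needed;
relative losses add up, giving the factor `1 - 2k/(h - k)`.
-/

lemma one_sub_add_mul_le_of_le_of_le {a b c x y : ℝ} (ha : 0 ≤ a) (hc : 0 ≤ c) (hx : 0 ≤ x)
    (hy : 0 ≤ y) (hab : (1 - x) * a ≤ b) (hbc : (1 - y) * b ≤ c) :
    (1 - (x + y)) * a ≤ c := by
  rcases le_or_gt 0 (1 - y) with hy1 | hy1
  · nlinarith [mul_le_mul_of_nonneg_left hab hy1, mul_nonneg (mul_nonneg hx hy) ha]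
  · nlinarith

section Cut

variable {V : Type*} [Fintype V] [DecidableEq V] (w : V → V → ℝ)

lemma cutVal_nonneg (hnonneg : ∀ u v, 0 ≤ w u v) (S : Finset V) : 0 ≤ cutVal w S :=
  sum_nonneg fun _ _ ↦ sum_nonneg fun _ _ ↦ hnonneg _ _

lemma cutVal_insert (hsymm : ∀ u v, w u v = w v u) {S : Finset V} {v : V} (hv : v ∉ S) :
    cutVal w (insert v S) = cutVal w S + wdeg w v - 2 * ∑ x ∈ S, w x v := by
  have hvc : v ∈ Sᶜ := mem_compl.mpr hv
  have hcompl : (insert v S)ᶜ = Sᶜ.erase v := by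
    ext x
    simp
  have hdeg : wdeg w v = ∑ u ∈ S, w u v + ∑ u ∈ Sᶜ, w u v - w v v := by
    rw [wdeg, sum_erase_eq_sub (mem_univ v), sum_add_sum_compl]
  have hrow : ∑ y ∈ Sᶜ, w v y = ∑ y ∈ Sᶜ, w y v := sum_congr rfl fun y _ ↦ hsymm v y
  simp only [cutVal, hcompl, sum_insert hv, sum_erase_eq_sub hvc, sum_sub_distrib, hrow, hdeg]
  ring

lemma sum_sum_le_cutVal (hnonneg : ∀ u v, 0 ≤ w u v) {S A : Finset V} (hA : Disjoint A S) :
    ∑ v ∈ A, ∑ x ∈ S, w x v ≤ cutVal w S := by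
  conv_rhs => rw [cutVal, sum_comm]
  exact sum_le_sum_of_subset_of_nonneg (subset_compl_iff_disjoint_right.mpr hA)
    fun _ _ _ ↦ sum_nonneg fun _ _ ↦ hnonneg _ _

lemma exists_mem_sdiff_one_sub_mul_cutVal_le (hsymm : ∀ u v, w u v = w v u)
    (hnonneg : ∀ u v, 0 ≤ w u v) {H S : Finset V}
    (hdeg : ∀ u ∈ H, ∀ v ∉ H, wdeg w v ≤ wdeg w u) (hSH : #S < #H) {u : V} (huS : u ∈ S)
    (huH : u ∉ H) :
    ∃ v ∈ H \ S, (1 - 2 / ((#H : ℝ) - #S)) * cutVal w S ≤ cutVal w (insert v (S.erase u)) := by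
  set T := S.erase u
  have hgap : (0 : ℝ) < (#H : ℝ) - #S := sub_pos.mpr (by exact_mod_cast hSH)
  have hne : (H \ S).Nonempty := card_pos.mp (by have := le_card_sdiff S H; omega)
  obtain ⟨v, hv, hvmin⟩ := exists_min_image (H \ S) (fun v ↦ ∑ x ∈ T, w x v) hne
  obtain ⟨hvH, hvS⟩ := mem_sdiff.mp hv
  refine ⟨v, hv, ?_⟩
  have hcard : (#H : ℝ) - #S ≤ #(H \ S) := by
    have := le_card_sdiff S H
    rw [sub_le_iff_le_add]
    exact_mod_cast (show #H ≤ #(H \ S) + #S by omega)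
  have hT_le_S : ∀ v', ∑ x ∈ T, w x v' ≤ ∑ x ∈ S, w x v' := fun _ ↦
    sum_le_sum_of_subset_of_nonneg (erase_subset _ _) fun _ _ _ ↦ hnonneg _ _
  have hmin : (#(H \ S) : ℝ) * ∑ x ∈ T, w x v ≤ cutVal w S := by
    rw [← nsmul_eq_mul]
    exact (card_nsmul_le_sum _ _ _ hvmin).trans ((sum_le_sum fun v' _ ↦ hT_le_S v').trans
      (sum_sum_le_cutVal w hnonneg sdiff_disjoint))
  have hlink : ((#H : ℝ) - #S) * ∑ x ∈ T, w x v ≤ cutVal w S :=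
    (mul_le_mul_of_nonneg_right hcard (sum_nonneg fun _ _ ↦ hnonneg _ _)).trans hmin
  have hS : cutVal w S = cutVal w T + wdeg w u - 2 * ∑ x ∈ T, w x u := by
    conv_lhs => rw [← insert_erase huS]
    exact cutVal_insert w hsymm (notMem_erase u S)
  have hS' : cutVal w (insert v T) = cutVal w T + wdeg w v - 2 * ∑ x ∈ T, w x v :=
    cutVal_insert w hsymm fun h ↦ hvS (mem_of_mem_erase h)
  have hdeg_uv := hdeg v hvH u huH
  have hTu : 0 ≤ ∑ x ∈ T, w x u := sum_nonneg fun _ _ ↦ hnonneg _ _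
  have hloss : 2 / ((#H : ℝ) - #S) * cutVal w S ≥ 2 * ∑ x ∈ T, w x v := by
    rw [div_mul_eq_mul_div, ge_iff_le, le_div_iff₀ hgap]
    linarith
  linarith

end Cut

lemma insert_erase_sdiff {V : Type*} [DecidableEq V] {S H : Finset V} {u v : V} (hv : v ∈ H) :
    insert v (S.erase u) \ H = (S \ H).erase u := by
  ext x
  by_cases hx : x = v <;> aesop

lemma card_insert_erase {V : Type*} [DecidableEq V] {S : Finset V} {u v : V} (hu : u ∈ S)
    (hv : v ∉ S) : #(insert v (S.erase u)) = #S := by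
  rw [card_insert_of_notMem fun h ↦ hv (mem_of_mem_erase h), card_erase_of_mem hu]
  have := card_pos.mpr ⟨u, hu⟩
  omega

lemma exists_subset_card_eq_one_sub_mul_cutVal_le {V : Type*} [Fintype V] [DecidableEq V]
    (w : V → V → ℝ) (hsymm : ∀ u v, w u v = w v u) (hnonneg : ∀ u v, 0 ≤ w u v)
    {H : Finset V} (hdeg : ∀ u ∈ H, ∀ v ∉ H, wdeg w v ≤ wdeg w u) {S : Finset V}
    (hSH : #S < #H) :
    ∃ S' ⊆ H, #S' = #S ∧
      (1 - 2 * (#(S \ H) : ℝ) / ((#H : ℝ) - #S)) * cutVal w S ≤ cutVal w S' := by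
  induction hm : #(S \ H) generalizing S with
  | zero =>
    refine ⟨S, sdiff_eq_empty_iff_subset.mp (card_eq_zero.mp hm), rfl, ?_⟩
    simp
  | succ m ih =>
    obtain ⟨u, hu⟩ : (S \ H).Nonempty := card_pos.mp (by omega)
    obtain ⟨huS, huH⟩ := mem_sdiff.mp hu
    obtain ⟨v, hv, hstep⟩ :=
      exists_mem_sdiff_one_sub_mul_cutVal_le w hsymm hnonneg hdeg hSH huS huH
    obtain ⟨hvH, hvS⟩ := mem_sdiff.mp hv
    have hcard := card_insert_erase huS hvS
    have hm' : #(insert v (S.erase u) \ H) = m := by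
      rw [insert_erase_sdiff hvH, card_erase_of_mem hu, hm, Nat.add_sub_cancel]
    obtain ⟨S', hS'H, hS'card, hS'⟩ := ih (hcard ▸ hSH) hm'
    refine ⟨S', hS'H, hS'card.trans hcard, ?_⟩
    have hgap : (0 : ℝ) ≤ (#H : ℝ) - #S := sub_nonneg.mpr (by exact_mod_cast hSH.le)
    rw [hcard] at hS'
    convert one_sub_add_mul_le_of_le_of_le (cutVal_nonneg w hnonneg S)
      (cutVal_nonneg w hnonneg S') (by positivity) (by positivity) hstep hS' using 2
    push_cast
    ring

theorem iterated_exchange_general {V : Type*} [Fintype V] [DecidableEq V]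
    (w : V → V → ℝ) (hsymm : ∀ u v, w u v = w v u) (hnonneg : ∀ u v, 0 ≤ w u v)
    (k h : ℕ) (hkh : k < h)
    (H : Finset V) (hHcard : H.card = h)
    (hdeg : ∀ u ∈ H, ∀ v ∉ H, wdeg w v ≤ wdeg w u) :
    ∀ S : Finset V, S.card = k →
      ∃ S' ⊆ H, S'.card = k ∧
        (1 - 2 * (k : ℝ) / ((h : ℝ) - (k : ℝ))) * cutVal w S ≤ cutVal w S' := by
  intro S hSk
  subst hSk hHcard
  obtain ⟨S', hS'H, hS'card, hS'⟩ :=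
    exists_subset_card_eq_one_sub_mul_cutVal_le w hsymm hnonneg hdeg hkh
  refine ⟨S', hS'H, hS'card, le_trans ?_ hS'⟩
  have hgap : (0 : ℝ) ≤ (#H : ℝ) - #S := sub_nonneg.mpr (by exact_mod_cast hkh.le)
  have hout : (#(S \ H) : ℝ) ≤ #S := by exact_mod_cast card_le_card sdiff_subset
  gcongr
  exact cutVal_nonneg w hnonneg S

/-- Iterated exchange step in the proof of Theorem 2.1: if `H` consists of `h > k`
highest-weighted-degree vertices, then every `k`-set `S` can be replaced by a `k`-set
`S' ⊆ H` with `δ_w(S') ≥ (1 - 2k/(h-k))·δ_w(S)`. -/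
theorem iterated_exchange {V : Type*} [Fintype V] [DecidableEq V]
    (w : V → V → ℝ) (hsymm : ∀ u v, w u v = w v u) (hnonneg : ∀ u v, 0 ≤ w u v)
    (k h : ℕ) (hkh : k < h) (hhV : h ≤ Fintype.card V)
    (H : Finset V) (hHcard : H.card = h)
    (hdeg : ∀ u ∈ H, ∀ v ∉ H, wdeg w v ≤ wdeg w u) :
    ∀ S : Finset V, S.card = k →
      ∃ S' ⊆ H, S'.card = k ∧
        (1 - 2 * (k : ℝ) / ((h : ℝ) - (k : ℝ))) * cutVal w S ≤ cutVal w S' :=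
  iterated_exchange_general w hsymm hnonneg k h hkh H hHcard hdeg
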